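/- arXiv:1808.02880 — 5 statements merged into one kernel-verified Lean document; each statement's English description precedes it below -/
import Mathlib

section
/- For every positive integer n, the n×n matrix M with entries M_{ij} = (-1)^{n+i+j+1} · (i-1)! · j! · C(n-1, i-1) · C(n+j-1, j) · Σ_{k=0}^{i-1} C(n-i+k, j-1) · C(n+k-1, k) (for 1 ≤ i, j ≤ n, with C denoting the binomial coefficient) satisfies M · H = 1, where H is the n×n factorial Hankel matrix with entries H_{ij} = 1/(i+j-1)!. Hence H is invertible with inverse M. -/
open Finset

section AuxLemmas

section
open Polynomial

private lemma hankel_lemA (m s r : ℕ) :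
    ∑ t ∈ range (m+1), (-1:ℝ)^t * m.choose t * (s+t).choose r
      = (-1:ℝ)^m * (if m ≤ r then ((s.choose (r-m)) : ℝ) else 0) := by
  have key : ((1+X:ℝ[X])^s * X^m).coeff r
      = ∑ t ∈ range (m+1), (-1:ℝ)^(t+m) * m.choose t * (s+t).choose r := by
    have hX : (X:ℝ[X])^m = ((1+X) - 1)^m := by ring_nf
    rw [hX, sub_pow, Finset.mul_sum, finset_sum_coeff]
    refine Finset.sum_congr rfl fun t ht => ?_
    have hterm : (1+X:ℝ[X])^s * ((-1) ^ (t + m) * (1+X) ^ t * 1 ^ (m - t) * (m.choose t : ℝ[X]))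
        = Polynomial.C ((-1:ℝ)^(t+m) * m.choose t) * (1+X)^(s+t) := by
      simp only [map_mul, map_pow, map_neg, map_one, Polynomial.C_eq_natCast]
      rw [pow_add]
      ring
    rw [hterm, coeff_C_mul, coeff_one_add_X_pow]
  rw [coeff_mul_X_pow', coeff_one_add_X_pow] at key
  rw [key, Finset.mul_sum]
  refine Finset.sum_congr rfl fun t ht => ?_
  have h2 : (-1:ℝ)^m * (-1)^(t+m) = (-1)^t := by
    rw [← pow_add, show m + (t+m) = 2*m + t by omega, pow_add, pow_mul, neg_one_sq, one_pow, one_mul]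
  rw [← mul_assoc, ← mul_assoc, h2]

end

section
open PowerSeries

private lemma hankel_coeff_one_sub_pow (n k : ℕ) :
    PowerSeries.coeff k ((1 - PowerSeries.X)^n) = (-1:ℝ)^k * n.choose k := by
  have h : (1 - PowerSeries.X : ℝ⟦X⟧)^n
      = ∑ m ∈ range (n+1), PowerSeries.C ((-1:ℝ)^m * n.choose m) * X^m := by
    rw [show (1 - X : ℝ⟦X⟧) = -X + 1 by ring, add_pow]
    refine Finset.sum_congr rfl fun m hm => ?_
    simp only [map_mul, map_pow, map_neg, map_one, PowerSeries.C_eq_algebraMap,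
      map_natCast]
    rw [neg_pow]
    ring
  rw [h, map_sum]
  simp only [PowerSeries.coeff_C_mul, coeff_X_pow, mul_ite, mul_one, mul_zero]
  rw [Finset.sum_ite_eq (range (n+1)) k (fun m => (-1:ℝ)^m * n.choose m)]
  split
  · rfl
  · rename_i hk
    rw [Finset.mem_range, not_lt] at hk
    rw [Nat.choose_eq_zero_of_lt (by omega)]
    simp

private lemma hankel_lemB (n r : ℕ) (hn : 0 < n) :
    ∑ k ∈ range (r+1), (-1:ℝ)^k * (n-1+k).choose k * n.choose (r-k)
      = if r = 0 then 1 else 0 := by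
  have hmul : ((1 - PowerSeries.X : ℝ⟦X⟧)^n)
      * (PowerSeries.mk fun k => ((n-1+k).choose (n-1) : ℝ)) = 1 := by
    have h1 := PowerSeries.invOneSubPow_inv_eq_one_sub_pow (S := ℝ) (d := n)
    have h2 := PowerSeries.invOneSubPow_val_eq_mk_sub_one_add_choose_of_pos (S := ℝ) (d := n) hn
    rw [← h1, ← h2]
    exact (PowerSeries.invOneSubPow ℝ n).inv_val
  have h := congrArg (PowerSeries.coeff r) hmul
  rw [PowerSeries.coeff_mul, Finset.Nat.sum_antidiagonal_eq_sum_range_succ_mk,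
    PowerSeries.coeff_one] at h
  simp only [hankel_coeff_one_sub_pow, PowerSeries.coeff_mk] at h
  have hT : ∑ k ∈ range (r+1), (-1:ℝ)^k * (n-1+k).choose k * n.choose (r-k)
      = (-1:ℝ)^r * ∑ k ∈ range (r+1), (-1:ℝ)^k * n.choose k * (n-1+(r-k)).choose (n-1) := by
    rw [← Finset.sum_range_reflect, Finset.mul_sum]
    refine Finset.sum_congr rfl fun k hk => ?_
    rw [Finset.mem_range] at hk
    have h1 : r + 1 - 1 - k = r - k := by omega
    rw [h1]
    have h2 : (n-1+(r-k)).choose (r-k) = (n-1+(r-k)).choose (n-1) := by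
      rw [← Nat.choose_symm (by omega : n-1 ≤ n-1+(r-k)), Nat.add_sub_cancel_left]
    have h3 : r - (r - k) = k := by omega
    rw [h2, h3]
    have h4 : (-1:ℝ)^(r-k) = (-1:ℝ)^r * (-1:ℝ)^k := by
      have : (-1:ℝ)^(r-k) * (-1:ℝ)^k * (-1:ℝ)^k = (-1:ℝ)^r * (-1:ℝ)^k := by
        rw [← pow_add, show r - k + k = r by omega]
      calc (-1:ℝ)^(r-k) = (-1:ℝ)^(r-k) * ((-1:ℝ)^k * (-1:ℝ)^k) := by
            rw [← pow_add, ← two_mul, pow_mul, neg_one_sq, one_pow, mul_one]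
        _ = (-1:ℝ)^r * (-1:ℝ)^k := by rw [← mul_assoc, this]
    rw [h4]
    ring
  rw [hT, h]
  rcases Nat.eq_zero_or_pos r with hr | hr
  · simp [hr]
  · simp [Nat.pos_iff_ne_zero.mp hr]

end

private lemma hankel_key (n a b : ℕ) (ha : a < n) (hb : b < n) :
    ∑ c ∈ range n, ((-1:ℝ)^(n+a+c+3) * a.factorial * (c+1).factorial * ((n-1).choose a)
        * ((n+c).choose (c+1))
        * (∑ k ∈ range (a+1), (((n-1-a+k).choose c : ℝ) * ((n-1+k).choose k)))
        / (c+b+1).factorial)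
      = if a = b then 1 else 0 := by
  set A : ℝ := (-1:ℝ)^(n+a+3) * a.factorial * ((n-1).choose a)
      * ((n-1-b).factorial / (n-1).factorial) with hA
  have hfact : ∀ c : ℕ, ((c+1).factorial : ℝ) * ((n+c).choose (c+1)) * (n-1).factorial
      = ((n-1-b).factorial) * ((n+c).choose (n-1-b)) * (c+b+1).factorial := by
    intro c
    have e1 : (n+c).choose (c+1) * (c+1).factorial * (n-1).factorial = (n+c).factorial := by
      have := Nat.choose_mul_factorial_mul_factorial (show c+1 ≤ n+c by omega)
      rwa [show n+c-(c+1) = n-1 by omega] at this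
    have e2 : (n+c).choose (n-1-b) * (n-1-b).factorial * (c+b+1).factorial
        = (n+c).factorial := by
      have := Nat.choose_mul_factorial_mul_factorial (show n-1-b ≤ n+c by omega)
      rwa [show n+c-(n-1-b) = c+b+1 by omega] at this
    have e1' : ((n+c).choose (c+1) : ℝ) * (c+1).factorial * (n-1).factorial
        = (n+c).factorial := by exact_mod_cast congrArg Nat.cast e1
    have e2' : ((n+c).choose (n-1-b) : ℝ) * (n-1-b).factorial * (c+b+1).factorial
        = (n+c).factorial := by exact_mod_cast congrArg Nat.cast e2
    linear_combination e1' - e2'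
  calc
    ∑ c ∈ range n, ((-1:ℝ)^(n+a+c+3) * a.factorial * (c+1).factorial * ((n-1).choose a)
        * ((n+c).choose (c+1))
        * (∑ k ∈ range (a+1), (((n-1-a+k).choose c : ℝ) * ((n-1+k).choose k)))
        / (c+b+1).factorial)
      = ∑ c ∈ range n, ∑ k ∈ range (a+1),
          A * ((n-1+k).choose k : ℝ)
            * ((-1:ℝ)^c * ((n-1-a+k).choose c : ℝ) * ((n+c).choose (n-1-b) : ℝ)) := by
        refine Finset.sum_congr rfl fun c hc => ?_
        rw [Finset.mul_sum, Finset.sum_div]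
        refine Finset.sum_congr rfl fun k hk => ?_
        rw [hA, show n+a+c+3 = (n+a+3)+c by omega, pow_add]
        have h0 : ((n-1).factorial : ℝ) ≠ 0 := by positivity
        have h1 : ((c+b+1).factorial : ℝ) ≠ 0 := by positivity
        field_simp
        linear_combination (((n-1).choose a : ℝ)
          * ((n-1-a+k).choose c) * ((n-1+k).choose k)) * hfact c
    _ = ∑ k ∈ range (a+1), A * ((n-1+k).choose k : ℝ)
          * ∑ c ∈ range n, ((-1:ℝ)^c * ((n-1-a+k).choose c : ℝ)
              * ((n+c).choose (n-1-b) : ℝ)) := by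
        rw [Finset.sum_comm]
        exact Finset.sum_congr rfl fun k hk => by rw [Finset.mul_sum]
    _ = ∑ k ∈ range (a+1), A * ((n-1+k).choose k : ℝ)
          * ((-1:ℝ)^(n-1-a+k)
              * (if b + k ≤ a then (n.choose (a-b-k) : ℝ) else 0)) := by
        refine Finset.sum_congr rfl fun k hk => ?_
        rw [Finset.mem_range] at hk
        congr 1
        have hsub : ∑ c ∈ range n, ((-1:ℝ)^c * ((n-1-a+k).choose c : ℝ)
              * ((n+c).choose (n-1-b) : ℝ))
            = ∑ c ∈ range ((n-1-a+k)+1), ((-1:ℝ)^c * ((n-1-a+k).choose c : ℝ)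
              * ((n+c).choose (n-1-b) : ℝ)) := by
          symm
          refine Finset.sum_subset (Finset.range_subset_range.2 (by omega)) fun c hc hc' => ?_
          rw [Finset.mem_range] at hc hc'
          rw [Nat.choose_eq_zero_of_lt (by omega)]
          simp
        rw [hsub, hankel_lemA (n-1-a+k) n (n-1-b)]
        congr 1
        by_cases hcond : b + k ≤ a
        · rw [if_pos (by omega : n-1-a+k ≤ n-1-b), if_pos hcond,
            show n-1-b-(n-1-a+k) = a-b-k by omega]
        · rw [if_neg (by omega), if_neg hcond]
    _ = ∑ k ∈ range (a+1), ((a.factorial : ℝ) * ((n-1).choose a)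
          * ((n-1-b).factorial / (n-1).factorial))
          * ((-1:ℝ)^k * ((n-1+k).choose k : ℝ)
              * (if b + k ≤ a then (n.choose (a-b-k) : ℝ) else 0)) := by
        refine Finset.sum_congr rfl fun k hk => ?_
        rw [hA]
        have hsign : (-1:ℝ)^(n+a+3) * (-1:ℝ)^(n-1-a+k) = (-1:ℝ)^k := by
          rw [← pow_add, show (n+a+3)+(n-1-a+k) = 2*(n+1)+k by omega, pow_add,
            pow_mul, neg_one_sq, one_pow, one_mul]
        calc (-1:ℝ)^(n+a+3) * a.factorial * ((n-1).choose a)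
              * ((n-1-b).factorial / (n-1).factorial) * ((n-1+k).choose k : ℝ)
              * ((-1:ℝ)^(n-1-a+k) * (if b + k ≤ a then (n.choose (a-b-k) : ℝ) else 0))
            = ((-1:ℝ)^(n+a+3) * (-1:ℝ)^(n-1-a+k)) * ((a.factorial : ℝ) * ((n-1).choose a)
              * ((n-1-b).factorial / (n-1).factorial) * (((n-1+k).choose k : ℝ)
              * (if b + k ≤ a then (n.choose (a-b-k) : ℝ) else 0))) := by ring
          _ = _ := by rw [hsign]; ring
    _ = if a = b then 1 else 0 := by
        by_cases hba : b ≤ a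
        · have htrim : ∑ k ∈ range (a+1), ((-1:ℝ)^k * ((n-1+k).choose k : ℝ)
              * (if b + k ≤ a then (n.choose (a-b-k) : ℝ) else 0))
              = ∑ k ∈ range ((a-b)+1), ((-1:ℝ)^k * ((n-1+k).choose k : ℝ)
                * ((n.choose ((a-b)-k)) : ℝ)) := by
            symm
            rw [← Finset.sum_subset (Finset.range_subset_range.2 (by omega : a-b+1 ≤ a+1))
              (fun k hk hk' => ?_)]
            · refine Finset.sum_congr rfl fun k hk => ?_
              rw [Finset.mem_range] at hk
              rw [if_pos (by omega), show a-b-k = (a-b)-k by omega]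
            · rw [Finset.mem_range] at hk hk'
              rw [if_neg (by omega)]
              simp
          rw [← Finset.mul_sum, htrim, hankel_lemB n (a-b) (by omega)]
          by_cases hab : a = b
          · rw [if_pos (by omega), if_pos hab, mul_one]
            have e3 : ((n-1).choose a : ℝ) * a.factorial * (n-1-a).factorial
                = (n-1).factorial := by
              exact_mod_cast congrArg Nat.cast
                (Nat.choose_mul_factorial_mul_factorial (show a ≤ n-1 by omega))
            have h0 : ((n-1).factorial : ℝ) ≠ 0 := by positivity
            rw [hab] at e3 ⊢
            field_simp
            linear_combination e3
          · rw [if_neg (by omega), if_neg hab, mul_zero]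
        · rw [if_neg (by omega)]
          refine Finset.sum_eq_zero fun k hk => ?_
          rw [if_neg (by omega)]
          simp

end AuxLemmas

/-- **Inverse of the factorial Hankel matrix.**
For every positive integer `n`, the explicit matrix `M` satisfies `M * H = 1`,
where `H` is the factorial Hankel matrix `H i j = 1/(i+j-1)!`; hence `H` is
invertible with inverse `M`. Indices `i j : Fin n` correspond to the
1-indexed entries `i+1, j+1`. -/
theorem factorial_hankel_mul_inv_eq_one (n : ℕ) (hn : 0 < n)
    (H M : Matrix (Fin n) (Fin n) ℝ)
    (hH : ∀ i j : Fin n, H i j = 1 / (((i : ℕ) + 1) + ((j : ℕ) + 1) - 1).factorial)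
    (hM : ∀ i j : Fin n, M i j =
      (-1 : ℝ) ^ (n + ((i : ℕ) + 1) + ((j : ℕ) + 1) + 1) *
        (((i : ℕ) + 1) - 1).factorial * ((j : ℕ) + 1).factorial *
        (n - 1).choose (((i : ℕ) + 1) - 1) *
        (n + ((j : ℕ) + 1) - 1).choose ((j : ℕ) + 1) *
        ∑ k ∈ Finset.range (((i : ℕ) + 1) - 1 + 1),
          ((n - ((i : ℕ) + 1) + k).choose (((j : ℕ) + 1) - 1) *
            (n + k - 1).choose k : ℝ)) :
    M * H = 1 ∧ H⁻¹ = M := by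
  have hMH : M * H = 1 := by
    ext i l
    rw [Matrix.mul_apply, Matrix.one_apply]
    calc ∑ j : Fin n, M i j * H j l
        = ∑ j : Fin n, ((-1:ℝ)^(n+(i:ℕ)+(j:ℕ)+3) * (i:ℕ).factorial
            * ((j:ℕ)+1).factorial * ((n-1).choose (i:ℕ))
            * ((n+(j:ℕ)).choose ((j:ℕ)+1))
            * (∑ k ∈ range ((i:ℕ)+1), (((n-1-(i:ℕ)+k).choose (j:ℕ) : ℝ)
                * ((n-1+k).choose k)))
            / ((j:ℕ)+(l:ℕ)+1).factorial) := by
          refine Finset.sum_congr rfl fun j _ => ?_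
          rw [hM i j, hH j l]
          simp only [Nat.add_sub_cancel,
            show n + ((i:ℕ)+1) + ((j:ℕ)+1) + 1 = n+(i:ℕ)+(j:ℕ)+3 from by omega,
            show n + ((j:ℕ)+1) - 1 = n + (j:ℕ) from by omega,
            show ((j:ℕ)+1) + ((l:ℕ)+1) - 1 = (j:ℕ)+(l:ℕ)+1 from by omega,
            show n - ((i:ℕ)+1) = n - 1 - (i:ℕ) from by omega,
            show ∀ k : ℕ, n + k - 1 = n - 1 + k from fun k => by omega]
          ring
      _ = ∑ c ∈ range n, ((-1:ℝ)^(n+(i:ℕ)+c+3) * (i:ℕ).factorial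
            * (c+1).factorial * ((n-1).choose (i:ℕ))
            * ((n+c).choose (c+1))
            * (∑ k ∈ range ((i:ℕ)+1), (((n-1-(i:ℕ)+k).choose c : ℝ)
                * ((n-1+k).choose k)))
            / (c+(l:ℕ)+1).factorial) :=
          Fin.sum_univ_eq_sum_range (fun c => ((-1:ℝ)^(n+(i:ℕ)+c+3) * (i:ℕ).factorial
            * (c+1).factorial * ((n-1).choose (i:ℕ))
            * ((n+c).choose (c+1))
            * (∑ k ∈ range ((i:ℕ)+1), (((n-1-(i:ℕ)+k).choose c : ℝ)
                * ((n-1+k).choose k)))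
            / (c+(l:ℕ)+1).factorial)) n
      _ = if (i:ℕ) = (l:ℕ) then 1 else 0 := by
          exact hankel_key n (i:ℕ) (l:ℕ) i.isLt l.isLt
      _ = if i = l then 1 else 0 := by
          congr 1
          simp [Fin.ext_iff]
  exact ⟨hMH, Matrix.inv_eq_left_inv hMH⟩
end

section
/- For every positive integer n, the n×n factorial Hankel matrix H with entries H_{ij} = 1/(i+j-1)! (for 1 ≤ i, j ≤ n) is invertible; equivalently, its determinant is nonzero. -/
open Polynomial Finset

private lemma fact_mul_prod (a b : ℕ) :
    a.factorial * ∏ k ∈ Finset.range b, (a + 1 + k) = (a + b).factorial := by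
  induction b with
  | zero => simp
  | succ b ih =>
    rw [Finset.prod_range_succ, ← mul_assoc, ih]
    rw [show a + (b + 1) = (a + b) + 1 by ring, Nat.factorial_succ]
    ring

/-- **Invertibility of the factorial Hankel matrix.**
For every positive integer `n`, the `n × n` matrix with entries
`H i j = 1/(i+j-1)!` (1-indexed) is invertible; equivalently, its determinant
is nonzero. -/
theorem factorial_hankel_det_ne_zero (n : ℕ) (hn : 0 < n)
    (H : Matrix (Fin n) (Fin n) ℝ)
    (hH : ∀ i j : Fin n, H i j = 1 / (((i : ℕ) + 1) + ((j : ℕ) + 1) - 1).factorial) :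
    IsUnit H ∧ H.det ≠ 0 := by
  -- the family of monic polynomials, `p j` has degree `j`
  set p : Fin n → ℝ[X] := fun j =>
    ∏ k ∈ Finset.range (j : ℕ), (X + C ((n - (j : ℕ) + 1 + k : ℕ) : ℝ)) with hp
  have hmonic : ∀ j, (p j).Monic := fun j =>
    monic_prod_of_monic _ _ fun k _ => monic_X_add_C _
  have hdeg : ∀ j : Fin n, (p j).natDegree = (j : ℕ) := by
    intro j
    rw [hp]
    rw [Polynomial.natDegree_prod _ _ (fun k _ => (monic_X_add_C _).ne_zero)]
    simp only [Polynomial.natDegree_X_add_C, Finset.sum_const, smul_eq_mul, mul_one,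
      Finset.card_range]
  -- the matrix of evaluations
  set M : Matrix (Fin n) (Fin n) ℝ :=
    Matrix.of (fun i j : Fin n => (p j).eval ((i : ℕ) : ℝ)) with hM
  have hMdet : M.det ≠ 0 := by
    rw [hM, ← Matrix.det_eval_matrixOfPolynomials_eq_det_vandermonde _ p hdeg hmonic]
    rw [Matrix.det_vandermonde_ne_zero_iff]
    intro a b hab
    exact Fin.val_injective (Nat.cast_injective hab)
  -- express H via M
  have key : H = Matrix.of (fun i j : Fin n =>
      (1 / ((n + (i : ℕ)).factorial : ℝ)) * (M.submatrix id Fin.revPerm) i j) := by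
    ext i j
    have hij : ((i : ℕ) + 1) + ((j : ℕ) + 1) - 1 = (i : ℕ) + (j : ℕ) + 1 := by omega
    rw [hH i j, hij]
    simp only [Matrix.of_apply, Matrix.submatrix_apply, id_eq, Fin.revPerm_apply, hM, hp]
    rw [Polynomial.eval_prod]
    have hrev : ((Fin.rev j : Fin n) : ℕ) = n - 1 - (j : ℕ) := by
      rw [Fin.val_rev]; omega
    have hc : ∀ k, n - ((Fin.rev j : Fin n) : ℕ) + 1 + k = (i:ℕ) + (j:ℕ) + 1 + 1 + k
        - (i : ℕ) := by
      intro k; rw [hrev]; omega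
    have heval : ∏ k ∈ Finset.range ((Fin.rev j : Fin n) : ℕ),
        Polynomial.eval ((i:ℕ):ℝ) (X + C ((n - ((Fin.rev j : Fin n) : ℕ) + 1 + k : ℕ) : ℝ))
        = ∏ k ∈ Finset.range (n - 1 - (j:ℕ)), (((i:ℕ) + (j:ℕ) + 1 + 1 + k : ℕ) : ℝ) := by
      rw [hrev]
      refine Finset.prod_congr rfl fun k _ => ?_
      have : n - (n - 1 - (j:ℕ)) + 1 + k = (j:ℕ) + 2 + k := by omega
      rw [this]
      push_cast
      simp
      ring
    rw [heval]
    have hfact : ((i:ℕ) + (j:ℕ) + 1).factorial *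
        ∏ k ∈ Finset.range (n - 1 - (j:ℕ)), ((i:ℕ) + (j:ℕ) + 1 + 1 + k) =
        (n + (i:ℕ)).factorial := by
      rw [fact_mul_prod ((i:ℕ) + (j:ℕ) + 1) (n - 1 - (j:ℕ))]
      congr 1
      omega
    have hfne : (((i:ℕ) + (j:ℕ) + 1).factorial : ℝ) ≠ 0 := by
      exact_mod_cast Nat.factorial_ne_zero _
    have hnfne : (((n + (i:ℕ)).factorial : ℝ)) ≠ 0 := by
      exact_mod_cast Nat.factorial_ne_zero _
    rw [← Nat.cast_prod]
    field_simp
    rw [mul_comm]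
    exact_mod_cast (hfact.symm.trans (mul_comm _ _))
  have hdet : H.det ≠ 0 := by
    rw [key, Matrix.det_mul_column, Matrix.det_permute']
    refine mul_ne_zero ?_ (mul_ne_zero ?_ hMdet)
    · exact Finset.prod_ne_zero_iff.mpr fun i _ => by
        positivity
    · rcases Int.units_eq_one_or (Equiv.Perm.sign (Fin.revPerm : Equiv.Perm (Fin n))) with h | h <;>
        simp [h]
  exact ⟨(Matrix.isUnit_iff_isUnit_det H).mpr (isUnit_iff_ne_zero.mpr hdet), hdet⟩
end

section
/- For every positive integer n, every entry of the inverse of the n×n factorial Hankel matrix H (with entries H_{ij} = 1/(i+j-1)!) is an integer; specifically, (H⁻¹)_{ij} = (-1)^{n+i+j+1} · (i-1)! · j! · C(n-1, i-1) · C(n+j-1, j) · Σ_{k=0}^{i-1} C(n-i+k, j-1) · C(n+k-1, k), which is an integer for all 1 ≤ i, j ≤ n. -/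
open Finset


lemma lemA (N : ℕ) : ∀ x r : ℕ,
    ∑ t ∈ range (N+1), (-1:ℤ)^t * N.choose t * (x+t).choose r
      = (-1)^N * (if N ≤ r then ((x.choose (r-N) : ℤ)) else 0) := by
  induction N with
  | zero => simp
  | succ N ih =>
    intro x r
    have hS2 : ∑ t ∈ range (N+1), (-1:ℤ)^(t+1) * N.choose (t+1) * (x+(t+1)).choose r
        = (∑ t ∈ range (N+1), (-1:ℤ)^t * N.choose t * (x+t).choose r) - x.choose r := by
      rw [Finset.sum_range_succ, Finset.sum_range_succ' (fun t => (-1:ℤ)^t * N.choose t * (x+t).choose r)]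
      simp [Nat.choose_succ_self]
    have key : ∑ t ∈ range (N+2), (-1:ℤ)^t * (N+1).choose t * (x+t).choose r
        = (∑ t ∈ range (N+1), (-1:ℤ)^t * N.choose t * (x+t).choose r)
          - ∑ t ∈ range (N+1), (-1:ℤ)^t * N.choose t * ((x+1)+t).choose r := by
      rw [Finset.sum_range_succ' (fun t => (-1:ℤ)^t * (N+1).choose t * (x+t).choose r)]
      have : ∀ t ∈ range (N+1), (-1:ℤ)^(t+1) * (N+1).choose (t+1) * (x+(t+1)).choose r
          = (-1)^(t+1) * N.choose (t+1) * (x+(t+1)).choose r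
            + (-((-1:ℤ)^t * N.choose t * ((x+1)+t).choose r)) := by
        intro t _
        rw [Nat.choose_succ_succ]
        have hx : x + (t+1) = (x+1) + t := by ring
        rw [hx]
        push_cast
        ring
      rw [Finset.sum_congr rfl this, Finset.sum_add_distrib, hS2]
      simp
      ring
    rw [key, ih x r, ih (x+1) r]
    by_cases h1 : N + 1 ≤ r
    · have h0 : N ≤ r := by omega
      obtain ⟨d, hd⟩ : ∃ d, r - N = d + 1 := ⟨r - (N+1), by omega⟩
      have hd2 : r - (N + 1) = d := by omega
      have hc : (((x+1).choose (d+1)) : ℤ) = x.choose d + x.choose (d+1) := by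
        rw [Nat.choose_succ_succ]; push_cast; ring
      simp only [if_pos h0, if_pos h1, hd, hd2, hc, pow_succ]
      ring
    · by_cases h0 : N ≤ r
      · have h2 : r - N = 0 := by omega
        simp only [if_pos h0, if_neg h1, h2, Nat.choose_zero_right]
        push_cast; ring
      · simp only [if_neg h0, if_neg h1]
        ring


lemma coeff_one_sub_X_pow (n q : ℕ) :
    (PowerSeries.coeff (R := ℤ) q) ((1 - PowerSeries.X)^n) = (-1)^q * n.choose q := by
  have h : (1 - PowerSeries.X : PowerSeries ℤ) ^ n
      = ∑ k ∈ range (n+1), PowerSeries.C (R := ℤ) ((-1)^k * n.choose k) * PowerSeries.X ^ k := by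
    rw [sub_eq_add_neg, add_comm, add_pow]
    refine Finset.sum_congr rfl fun k _ => ?_
    have h1 : ((n.choose k : PowerSeries ℤ)) = PowerSeries.C (R := ℤ) (n.choose k : ℤ) := by norm_cast
    rw [neg_pow, one_pow, mul_one, h1, map_mul, map_pow, map_neg, map_one]
    ring
  rw [h, map_sum]
  have h2 : ∀ k ∈ range (n+1),
      (PowerSeries.coeff (R := ℤ) q) (PowerSeries.C (R := ℤ) ((-1)^k * n.choose k) * PowerSeries.X ^ k)
        = if q = k then ((-1:ℤ)^q * n.choose q) else 0 := by
    intro k _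
    rw [PowerSeries.coeff_C_mul, PowerSeries.coeff_X_pow]
    by_cases hqk : q = k
    · subst hqk; simp
    · simp [hqk]
  rw [Finset.sum_congr rfl h2, Finset.sum_ite_eq (range (n+1)) q]
  by_cases hq : q ∈ range (n+1)
  · rw [if_pos hq]
  · rw [if_neg hq]
    have : n.choose q = 0 := Nat.choose_eq_zero_of_lt (by simpa using hq)
    simp [this]

lemma lemB (d s : ℕ) :
    ∑ m ∈ range (s+1), (-1:ℤ)^m * (d+m).choose m * (d+1).choose (s-m)
      = if s = 0 then 1 else 0 := by
  have h := congrArg (PowerSeries.coeff (R := ℤ) s)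
    (PowerSeries.mk_add_choose_mul_one_sub_pow_eq_one ℤ d)
  rw [PowerSeries.coeff_mul, PowerSeries.coeff_one,
      Finset.Nat.sum_antidiagonal_eq_sum_range_succ_mk] at h
  have h3 : ∀ m ∈ range (s+1),
      (PowerSeries.coeff (R := ℤ) m) (PowerSeries.mk fun n => ((d + n).choose d : ℤ)) *
        (PowerSeries.coeff (R := ℤ) (s - m)) ((1 - PowerSeries.X)^(d+1))
      = (-1)^(s-m) * ((d+m).choose d * (d+1).choose (s-m)) := by
    intro m _
    rw [PowerSeries.coeff_mk, coeff_one_sub_X_pow]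
    ring
  rw [Finset.sum_congr rfl h3] at h
  have h4 : ∀ m ∈ range (s+1),
      (-1:ℤ)^m * (d+m).choose m * (d+1).choose (s-m)
        = (-1)^s * ((-1)^(s-m) * ((d+m).choose d * (d+1).choose (s-m))) := by
    intro m hm
    have hms : m ≤ s := by simpa [Nat.lt_succ_iff] using hm
    have hsym : (d+m).choose m = (d+m).choose d := Nat.choose_symm_add.symm ▸ rfl
    have hpow : (-1:ℤ)^s * (-1)^(s-m) = (-1)^m := by
      rw [← pow_add]
      have : s + (s - m) = 2*(s-m) + m := by omega
      rw [this, pow_add, pow_mul]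
      simp
    rw [hsym]
    rw [← mul_assoc ((-1:ℤ)^s), hpow]
    ring
  rw [Finset.sum_congr rfl h4, ← Finset.mul_sum, h]
  by_cases hs : s = 0 <;> simp [hs]



lemma keyZ (n a b : ℕ) (ha : a < n) (hb : b < n) :
    ∑ j ∈ range n, ((-1:ℤ)^(n+a+j+3) * (n+j).choose (n-1-b) *
        ∑ m ∈ range (a+1), ((n - (a+1) + m).choose j * (n+m-1).choose m : ℤ))
      = if a = b then 1 else 0 := by
  have step1 : ∑ j ∈ range n, ((-1:ℤ)^(n+a+j+3) * (n+j).choose (n-1-b) *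
        ∑ m ∈ range (a+1), ((n - (a+1) + m).choose j * (n+m-1).choose m : ℤ))
      = ∑ m ∈ range (a+1), ∑ j ∈ range n,
          ((-1:ℤ)^(n+a+j+3) * (n+j).choose (n-1-b) *
            ((n - (a+1) + m).choose j * (n+m-1).choose m)) := by
    rw [Finset.sum_comm]
    exact Finset.sum_congr rfl fun j _ => Finset.mul_sum _ _ _
  rw [step1]
  have step2 : ∀ m ∈ range (a+1), ∑ j ∈ range n,
          ((-1:ℤ)^(n+a+j+3) * (n+j).choose (n-1-b) *
            ((n - (a+1) + m).choose j * (n+m-1).choose m))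
      = (-1:ℤ)^m * (n+m-1).choose m * (if b + m ≤ a then ((n.choose (a-b-m)):ℤ) else 0) := by
    intro m hm
    have hm' : m ≤ a := by simpa [Nat.lt_succ_iff] using hm
    set N := n - (a+1) + m with hN
    have hNle : N + 1 ≤ n := by omega
    have e1 : ∑ j ∈ range n, ((-1:ℤ)^(n+a+j+3) * (n+j).choose (n-1-b) *
            (N.choose j * (n+m-1).choose m))
        = ((-1:ℤ)^(n+a+3) * (n+m-1).choose m) *
            ∑ j ∈ range n, ((-1:ℤ)^j * N.choose j * (n+j).choose (n-1-b)) := by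
      rw [Finset.mul_sum]
      refine Finset.sum_congr rfl fun j _ => ?_
      have : n+a+j+3 = (n+a+3)+j := by omega
      rw [this, pow_add]
      ring
    have e2 : ∑ j ∈ range n, ((-1:ℤ)^j * N.choose j * (n+j).choose (n-1-b))
        = ∑ j ∈ range (N+1), ((-1:ℤ)^j * N.choose j * (n+j).choose (n-1-b)) := by
      refine (Finset.sum_subset (Finset.range_subset_range.2 hNle) ?_).symm
      intro j hjn hj
      have hj' : N < j := by
        rcases Nat.lt_or_ge N j with h | h
        · exact h
        · exact absurd (Finset.mem_range.2 (by omega)) hj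
      rw [Nat.choose_eq_zero_of_lt hj']
      ring
    rw [e1, e2, lemA N n (n-1-b)]
    have e3 : (if N ≤ n-1-b then ((n.choose ((n-1-b)-N)):ℤ) else 0)
        = (if b + m ≤ a then ((n.choose (a-b-m)):ℤ) else 0) := by
      by_cases hc : b + m ≤ a
      · have harg : n-1-b-N = a-b-m := by omega
        rw [if_pos (by omega), if_pos hc, harg]
      · rw [if_neg (by omega), if_neg hc]
    have e4 : ((-1:ℤ)^(n+a+3)) * (-1:ℤ)^N = (-1:ℤ)^m := by
      rw [← pow_add]
      have : (n+a+3)+N = 2*(n+1)+m := by omega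
      rw [this, pow_add, pow_mul]
      norm_num
    rw [e3]
    calc (-1:ℤ)^(n+a+3) * (n+m-1).choose m *
          ((-1:ℤ)^N * (if b + m ≤ a then ((n.choose (a-b-m)):ℤ) else 0))
        = ((-1:ℤ)^(n+a+3) * (-1:ℤ)^N) * (n+m-1).choose m *
            (if b + m ≤ a then ((n.choose (a-b-m)):ℤ) else 0) := by ring
      _ = (-1:ℤ)^m * (n+m-1).choose m * (if b + m ≤ a then ((n.choose (a-b-m)):ℤ) else 0) := by
          rw [e4]
  rw [Finset.sum_congr rfl step2]
  by_cases hab : b ≤ a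
  · have e5 : ∑ m ∈ range (a+1), ((-1:ℤ)^m * (n+m-1).choose m *
          (if b + m ≤ a then ((n.choose (a-b-m)):ℤ) else 0))
        = ∑ m ∈ range ((a-b)+1), ((-1:ℤ)^m * ((n-1)+m).choose m * ((n-1)+1).choose ((a-b)-m)) := by
      rw [← Finset.sum_subset (Finset.range_subset_range.2 (by omega : (a-b)+1 ≤ a+1))]
      · refine Finset.sum_congr rfl fun m hm => ?_
        have hm' : m ≤ a - b := by simpa [Nat.lt_succ_iff] using hm
        rw [if_pos (by omega)]
        have h1 : n + m - 1 = (n-1) + m := by omega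
        have h2 : n = (n-1)+1 := by omega
        have h3 : a - b - m = (a-b) - m := rfl
        rw [h1, h3]
        nth_rewrite 2 [h2]
        rfl
      · intro m hmem hnot
        rw [if_neg (by simp [Nat.lt_succ_iff] at hmem hnot; omega)]
        ring
    rw [e5, lemB (n-1) (a-b)]
    by_cases he : a = b <;> simp [he] <;> omega
  · have e6 : ∀ m ∈ range (a+1), ((-1:ℤ)^m * (n+m-1).choose m *
          (if b + m ≤ a then ((n.choose (a-b-m)):ℤ) else 0)) = 0 := by
      intro m _
      rw [if_neg (by omega)]
      ring
    rw [Finset.sum_congr rfl e6, Finset.sum_const_zero, if_neg (by omega)]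



noncomputable def Mz (n a j : ℕ) : ℤ :=
  (-1)^(n+a+j+3) * a.factorial * (j+1).factorial * ((n-1).choose a) * ((n+j).choose (j+1)) *
    ∑ m ∈ range (a+1), ((n - (a+1) + m).choose j * (n+m-1).choose m : ℤ)

lemma Mz_cast (n a j : ℕ) : ((Mz n a j : ℤ):ℝ) =
    (-1 : ℝ) ^ (n + (a + 1) + (j + 1) + 1) *
      ((a + 1) - 1).factorial * (j + 1).factorial *
      (n - 1).choose ((a + 1) - 1) *
      (n + (j + 1) - 1).choose (j + 1) *
      ∑ k ∈ Finset.range ((a + 1) - 1 + 1),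
        ((n - (a + 1) + k).choose ((j + 1) - 1) * (n + k - 1).choose k : ℝ) := by
  have e1 : n + (a+1) + (j+1) + 1 = n + a + j + 3 := by omega
  have e2 : n + (j+1) - 1 = n + j := by omega
  have e3 : (a+1) - 1 = a := by omega
  have e4 : (j+1) - 1 = j := by omega
  rw [e1, e2, e3, e4]
  unfold Mz
  push_cast
  ring

/-- **Integrality of the inverse of the factorial Hankel matrix.**
For every positive integer `n`, each entry of the inverse of the factorial
Hankel matrix `H i j = 1/(i+j-1)!` is given by the stated explicit formula
and is an integer. Indices `i j : Fin n` correspond to the 1-indexed entries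
`i+1, j+1`. -/
theorem factorial_hankel_inv_entries_integer (n : ℕ) (hn : 0 < n)
    (H : Matrix (Fin n) (Fin n) ℝ)
    (hH : ∀ i j : Fin n, H i j = 1 / (((i : ℕ) + 1) + ((j : ℕ) + 1) - 1).factorial) :
    ∀ i j : Fin n,
      H⁻¹ i j =
        (-1 : ℝ) ^ (n + ((i : ℕ) + 1) + ((j : ℕ) + 1) + 1) *
          (((i : ℕ) + 1) - 1).factorial * ((j : ℕ) + 1).factorial *
          (n - 1).choose (((i : ℕ) + 1) - 1) *
          (n + ((j : ℕ) + 1) - 1).choose ((j : ℕ) + 1) *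
          ∑ k ∈ Finset.range (((i : ℕ) + 1) - 1 + 1),
            ((n - ((i : ℕ) + 1) + k).choose (((j : ℕ) + 1) - 1) *
              (n + k - 1).choose k : ℝ) ∧
      ∃ z : ℤ, H⁻¹ i j = (z : ℝ) := by
  have hfact : ∀ m : ℕ, ((m.factorial : ℝ)) ≠ 0 := fun m => by
    exact_mod_cast m.factorial_pos.ne'
  set M : Matrix (Fin n) (Fin n) ℝ := fun i j => ((Mz n (i:ℕ) (j:ℕ) : ℤ) : ℝ) with hM
  have hMH : M * H = 1 := by
    ext i k
    set a := (i : ℕ) with hA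
    set b := (k : ℕ) with hB
    have ha : a < n := i.isLt
    have hb : b < n := k.isLt
    rw [Matrix.mul_apply, Matrix.one_apply]
    -- convert to a sum over range n
    have hsum : ∑ jj : Fin n, M i jj * H jj k
        = ∑ j0 ∈ range n, ((Mz n a j0 : ℤ):ℝ) * (1/((j0 + b + 1).factorial : ℝ)) := by
      rw [← Fin.sum_univ_eq_sum_range (fun j0 => ((Mz n a j0 : ℤ):ℝ) * (1/((j0 + b + 1).factorial : ℝ))) n]
      refine Finset.sum_congr rfl fun jj _ => ?_
      rw [hH]
      have e : ((jj:ℕ) + 1) + (b + 1) - 1 = (jj:ℕ) + b + 1 := by omega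
      rw [e]
    rw [hsum]
    -- per-term simplification
    have hterm : ∀ j0 ∈ range n,
        ((Mz n a j0 : ℤ):ℝ) * (1/((j0 + b + 1).factorial : ℝ))
          = (((-1:ℤ)^(n+a+j0+3) * a.factorial * (n-1).choose a * (n+j0).choose (n-1-b) *
              ∑ m ∈ range (a+1), ((n - (a+1) + m).choose j0 * (n+m-1).choose m : ℤ) : ℤ) : ℝ)
            * (((n-1-b).factorial : ℝ) / ((n-1).factorial : ℝ)) := by
      intro j0 _
      have idA : (n+j0).choose (j0+1) * (j0+1).factorial * (n-1).factorial = (n+j0).factorial := by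
        have h := Nat.choose_mul_factorial_mul_factorial (show j0+1 ≤ n+j0 by omega)
        have e : n + j0 - (j0+1) = n - 1 := by omega
        rwa [e] at h
      have idB : (n+j0).choose (n-1-b) * (n-1-b).factorial * (j0+b+1).factorial
          = (n+j0).factorial := by
        have h := Nat.choose_mul_factorial_mul_factorial (show n-1-b ≤ n+j0 by omega)
        have e : n + j0 - (n-1-b) = j0 + b + 1 := by omega
        rwa [e] at h
      have idA' : ((n+j0).choose (j0+1) * (j0+1).factorial * (n-1).factorial : ℝ)
          = (n+j0).factorial := by exact_mod_cast congrArg (Nat.cast : ℕ → ℝ) idA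
      have idB' : ((n+j0).choose (n-1-b) * (n-1-b).factorial * (j0+b+1).factorial : ℝ)
          = (n+j0).factorial := by exact_mod_cast congrArg (Nat.cast : ℕ → ℝ) idB
      have hdiv : ((j0+1).factorial * ((n+j0).choose (j0+1)) : ℝ) / ((j0+b+1).factorial : ℝ)
          = (((n+j0).choose (n-1-b) : ℝ) * ((n-1-b).factorial : ℝ)) / ((n-1).factorial : ℝ) := by
        rw [div_eq_div_iff (hfact _) (hfact _)]
        push_cast at idA' idB' ⊢
        linear_combination idA' - idB'
      calc ((Mz n a j0 : ℤ):ℝ) * (1/((j0 + b + 1).factorial : ℝ))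
          = ((((-1:ℤ)^(n+a+j0+3) * a.factorial * (n-1).choose a *
              ∑ m ∈ range (a+1), ((n - (a+1) + m).choose j0 * (n+m-1).choose m : ℤ)):ℤ):ℝ)
            * (((j0+1).factorial * ((n+j0).choose (j0+1)) : ℝ) / ((j0+b+1).factorial : ℝ)) := by
            unfold Mz; push_cast; ring
        _ = ((((-1:ℤ)^(n+a+j0+3) * a.factorial * (n-1).choose a *
              ∑ m ∈ range (a+1), ((n - (a+1) + m).choose j0 * (n+m-1).choose m : ℤ)):ℤ):ℝ)
            * ((((n+j0).choose (n-1-b) : ℝ) * ((n-1-b).factorial : ℝ)) / ((n-1).factorial : ℝ)) := by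
            rw [hdiv]
        _ = (((-1:ℤ)^(n+a+j0+3) * a.factorial * (n-1).choose a * (n+j0).choose (n-1-b) *
              ∑ m ∈ range (a+1), ((n - (a+1) + m).choose j0 * (n+m-1).choose m : ℤ) : ℤ) : ℝ)
            * (((n-1-b).factorial : ℝ) / ((n-1).factorial : ℝ)) := by
            push_cast; ring
    rw [Finset.sum_congr rfl hterm, ← Finset.sum_mul, ← Int.cast_sum]
    have hfactor : ∑ j0 ∈ range n, ((-1:ℤ)^(n+a+j0+3) * a.factorial * (n-1).choose a *
            (n+j0).choose (n-1-b) *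
            ∑ m ∈ range (a+1), ((n - (a+1) + m).choose j0 * (n+m-1).choose m : ℤ))
        = (a.factorial * (n-1).choose a : ℤ) * (if a = b then 1 else 0) := by
      rw [← keyZ n a b ha hb, Finset.mul_sum]
      refine Finset.sum_congr rfl fun j0 _ => ?_
      ring
    rw [hfactor]
    by_cases hab : a = b
    · have hik : i = k := Fin.ext (by omega)
      rw [if_pos hab, if_pos hik, ← hab]
      have hc : (n-1).choose a * a.factorial * (n-1-a).factorial = (n-1).factorial := by
        have h := Nat.choose_mul_factorial_mul_factorial (show a ≤ n-1 by omega)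
        have e : n - 1 - a = n-1-a := rfl
        rwa [e] at h
      have hc' : ((n-1).choose a * a.factorial * (n-1-a).factorial : ℝ) = (n-1).factorial := by
        exact_mod_cast congrArg (Nat.cast : ℕ → ℝ) hc
      push_cast
      push_cast at hc'
      field_simp
      linear_combination hc'
    · have hik : ¬ (i = k) := fun h => hab (congrArg Fin.val h)
      rw [if_neg hab, if_neg hik]
      push_cast
      ring
  have hInv : H⁻¹ = M := Matrix.inv_eq_left_inv hMH
  intro i j
  constructor
  · rw [hInv]
    exact Mz_cast n (i:ℕ) (j:ℕ)
  · exact ⟨Mz n (i:ℕ) (j:ℕ), by rw [hInv]⟩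
end

section
/- For all positive integers n, i, l with 1 ≤ i ≤ n and 1 ≤ l ≤ n, and every natural number k with 0 ≤ k ≤ i - 1, the following identity holds in ℝ: Σ_{j=1}^{n} (-1)^j · (j!/(l+j-1)!) · C(n+j-1, j) · C(n-i+k, j-1) = (-1)^{n+i+k+1} · ((n-l)!/(n-1)!) · C(n, n+l-i+k). -/
open Finset
lemma descFact_cast (d m : ℕ) :
    (d.descFactorial (m+1) : ℝ) = ((d:ℝ) - m) * d.descFactorial m := by
  rcases le_or_gt (m+1) d with h | h
  · rw [Nat.descFactorial_succ]
    push_cast [Nat.cast_sub (by omega : m ≤ d)]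
    ring
  · rcases eq_or_lt_of_le (by omega : d ≤ m) with rfl | h2
    · rw [Nat.descFactorial_succ]
      simp
    · rw [Nat.descFactorial_succ, Nat.descFactorial_eq_zero_iff_lt.mpr h2]
      simp

lemma core (n l : ℕ) (hln : l ≤ n) : ∀ m t : ℕ,
    ∑ s ∈ range (m+1), (-1:ℝ)^s * (m.choose s) *
      ((n+t+s).factorial / (l+t+s).factorial)
    = (-1:ℝ)^m * ((n-l).descFactorial m) *
      ((n+t).factorial / (l+m+t).factorial)
  | 0, t => by simp
  | m+1, t => by
    have key : ∑ s ∈ range (m+2), (-1:ℝ)^s * ((m+1).choose s) *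
        ((n+t+s).factorial / (l+t+s).factorial)
      = (∑ s ∈ range (m+1), (-1:ℝ)^s * (m.choose s) *
          ((n+t+s).factorial / (l+t+s).factorial))
       - (∑ s ∈ range (m+1), (-1:ℝ)^s * (m.choose s) *
          ((n+(t+1)+s).factorial / (l+(t+1)+s).factorial)) := by
      rw [Finset.sum_range_succ' _ (m+1)]
      have pascal : ∀ s, ((m+1).choose (s+1) : ℝ) = (m.choose s) + (m.choose (s+1)) := by
        intro s; push_cast [Nat.choose_succ_succ]; ring
      have split : ∑ s ∈ range (m+1), (-1:ℝ)^(s+1) * ((m+1).choose (s+1)) *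
          ((n+t+(s+1)).factorial / (l+t+(s+1)).factorial)
        = (∑ s ∈ range (m+1), -((-1:ℝ)^s * (m.choose s) *
            ((n+(t+1)+s).factorial / (l+(t+1)+s).factorial)))
          + ∑ s ∈ range (m+1), (-1:ℝ)^(s+1) * (m.choose (s+1)) *
            ((n+t+(s+1)).factorial / (l+t+(s+1)).factorial) := by
        rw [← Finset.sum_add_distrib]
        apply Finset.sum_congr rfl
        intro s _
        rw [pascal]
        have e1 : n+t+(s+1) = n+(t+1)+s := by ring
        have e2 : l+t+(s+1) = l+(t+1)+s := by ring
        rw [e1, e2]; ring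
      rw [split]
      have shift : ∑ s ∈ range (m+1), (-1:ℝ)^(s+1) * (m.choose (s+1)) *
          ((n+t+(s+1)).factorial / (l+t+(s+1)).factorial)
        = (∑ s ∈ range (m+1), (-1:ℝ)^s * (m.choose s) *
            ((n+t+s).factorial / (l+t+s).factorial))
          - (-1:ℝ)^0 * (m.choose 0) * ((n+t+0).factorial / (l+t+0).factorial) := by
        have h1 : ∑ s ∈ range (m+2), (-1:ℝ)^s * (m.choose s) *
            ((n+t+s).factorial / (l+t+s).factorial)
          = (∑ s ∈ range (m+1), (-1:ℝ)^(s+1) * (m.choose (s+1)) *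
              ((n+t+(s+1)).factorial / (l+t+(s+1)).factorial))
            + (-1:ℝ)^0 * (m.choose 0) * ((n+t+0).factorial / (l+t+0).factorial) :=
          Finset.sum_range_succ' _ (m+1)
        have h2 : ∑ s ∈ range (m+2), (-1:ℝ)^s * (m.choose s) *
            ((n+t+s).factorial / (l+t+s).factorial)
          = (∑ s ∈ range (m+1), (-1:ℝ)^s * (m.choose s) *
              ((n+t+s).factorial / (l+t+s).factorial)) := by
          rw [Finset.sum_range_succ, Nat.choose_eq_zero_of_lt (by omega)]
          simp
        rw [h2] at h1
        linarith
      rw [shift, Finset.sum_neg_distrib]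
      simp only [Nat.choose_zero_right, Nat.cast_one]
      ring
    rw [key, core n l hln m t, core n l hln m (t+1)]
    rw [descFact_cast]
    have e1 : l + m + (t+1) = l + (m+1) + t := by ring
    rw [e1]
    have hA : ((l + (m+1) + t).factorial : ℝ) ≠ 0 := by positivity
    have hfs1 : ((n + (t+1)).factorial : ℝ) = ((n+t+1 : ℕ) : ℝ) * (n+t).factorial := by
      have : n + (t+1) = (n+t) + 1 := by ring
      rw [this, Nat.factorial_succ]; push_cast; ring
    have hfs2 : ((l + (m+1) + t).factorial : ℝ) = ((l+m+t+1 : ℕ) : ℝ) * (l+m+t).factorial := by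
      have : l + (m+1) + t = (l+m+t) + 1 := by ring
      rw [this, Nat.factorial_succ]; push_cast; ring
    have hB : ((l + m + t).factorial : ℝ) ≠ 0 := by positivity
    rw [hfs1, hfs2]
    field_simp
    push_cast [Nat.cast_sub hln]; ring


/-- **Lemma 1 of the paper:** for `1 ≤ i ≤ n`, `1 ≤ l ≤ n` and `0 ≤ k ≤ i-1`,
`∑_{j=1}^{n} (-1)^j (j!/(l+j-1)!) C(n+j-1, j) C(n-i+k, j-1)
  = (-1)^{n+i+k+1} ((n-l)!/(n-1)!) C(n, n+l-i+k)` in `ℝ`. -/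
theorem factorial_hankel_lemma1 (n i l : ℕ) (k : ℕ)
    (hi : 1 ≤ i) (hin : i ≤ n) (hl : 1 ≤ l) (hln : l ≤ n) (hk : k ≤ i - 1) :
    ∑ j ∈ Finset.Icc 1 n,
        (-1 : ℝ) ^ j * ((j.factorial : ℝ) / ((l + j - 1).factorial : ℝ)) *
          ((n + j - 1).choose j : ℝ) * ((n - i + k).choose (j - 1) : ℝ) =
      (-1 : ℝ) ^ (n + i + k + 1) * (((n - l).factorial : ℝ) / ((n - 1).factorial : ℝ)) *
        (n.choose (n + l - i + k) : ℝ) := by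
  set m := n - i + k with hm
  have hmn : m + 1 ≤ n := by omega
  -- Step 1: Icc 1 n → range n with j = 1 + s
  rw [← Finset.Ico_add_one_right_eq_Icc, Finset.sum_Ico_eq_sum_range]
  simp only [Nat.add_sub_cancel]
  -- Step 2: restrict to range (m+1)
  have hrestrict : ∑ s ∈ range n,
      (-1 : ℝ) ^ (1+s) * (((1+s).factorial : ℝ) / ((l + (1+s) - 1).factorial : ℝ)) *
        ((n + (1+s) - 1).choose (1+s) : ℝ) * (m.choose ((1+s) - 1) : ℝ)
    = ∑ s ∈ range (m+1),
      (-1 : ℝ) ^ (1+s) * (((1+s).factorial : ℝ) / ((l + (1+s) - 1).factorial : ℝ)) *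
        ((n + (1+s) - 1).choose (1+s) : ℝ) * (m.choose ((1+s) - 1) : ℝ) := by
    refine (Finset.sum_subset (Finset.range_subset_range.mpr hmn) ?_).symm
    intro s _ hs
    rw [Finset.mem_range, not_lt] at hs
    have : m.choose ((1+s)-1) = 0 := Nat.choose_eq_zero_of_lt (by omega)
    rw [this]
    simp
  rw [hrestrict]
  -- Step 3: rewrite each term
  have hterm : ∀ s ∈ range (m+1),
      (-1 : ℝ) ^ (1+s) * (((1+s).factorial : ℝ) / ((l + (1+s) - 1).factorial : ℝ)) *
        ((n + (1+s) - 1).choose (1+s) : ℝ) * (m.choose ((1+s) - 1) : ℝ)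
    = -(((n-1).factorial : ℝ))⁻¹ *
        ((-1:ℝ)^s * (m.choose s) * ((n+s).factorial / (l+s).factorial)) := by
    intro s _
    have e1 : l + (1+s) - 1 = l + 0 + s := by omega
    have e2 : n + (1+s) - 1 = n + s := by omega
    have e3 : (1+s) - 1 = s := by omega
    rw [e1, e2, e3]
    have hch : ((n+s).choose (1+s) : ℝ) * (1+s).factorial * (n-1).factorial
        = (n+s).factorial := by
      have := Nat.choose_mul_factorial_mul_factorial (show 1+s ≤ n+s by omega)
      have e4 : n + s - (1+s) = n - 1 := by omega
      rw [e4] at this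
      exact_mod_cast this
    have hne1 : ((1+s).factorial : ℝ) ≠ 0 := by positivity
    have hne2 : (((n-1).factorial : ℝ)) ≠ 0 := by positivity
    have hne3 : (((l+s).factorial : ℝ)) ≠ 0 := by positivity
    have hch' : ((n+s).choose (1+s) : ℝ)
        = (n+s).factorial / ((1+s).factorial * (n-1).factorial) := by
      field_simp
      linear_combination hch
    rw [hch', pow_add]
    field_simp
    ring
  have hcore : ∑ s ∈ range (m+1), (-1:ℝ)^s * (m.choose s) * ((n+s).factorial / (l+s).factorial)
    = (-1:ℝ)^m * ((n-l).descFactorial m) * (n.factorial / (l+m).factorial) := by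
    have := core n l hln m 0
    simpa using this
  rw [Finset.sum_congr rfl hterm, ← Finset.mul_sum, hcore]
  -- RHS manipulation
  have hidx : n + l - i + k = l + m := by omega
  rw [hidx]
  have hsign : (-1:ℝ)^(n+i+k+1) = -(-1:ℝ)^m := by
    have : n+i+k+1 = (m+1) + 2*i := by omega
    rw [this, pow_add, pow_mul]
    simp [pow_succ]
  rw [hsign]
  -- key nat identity
  have hnat : (n-l).descFactorial m * n.factorial
      = (n-l).factorial * (n.choose (l+m) * (l+m).factorial) := by
    rcases le_or_gt (l+m) n with h | h
    · have h1 := Nat.choose_mul_factorial_mul_factorial h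
      have h2 := Nat.factorial_mul_descFactorial (show m ≤ n-l by omega)
      have e : n - (l+m) = n - l - m := by omega
      rw [e] at h1
      calc (n-l).descFactorial m * n.factorial
          = (n-l).descFactorial m * (n.choose (l+m) * (l+m).factorial * (n-l-m).factorial) := by
            rw [h1]
        _ = (n.choose (l+m) * (l+m).factorial) * ((n-l-m).factorial * (n-l).descFactorial m) := by
            ring
        _ = (n-l).factorial * (n.choose (l+m) * (l+m).factorial) := by rw [h2]; ring
    · rw [Nat.descFactorial_eq_zero_iff_lt.mpr (by omega), Nat.choose_eq_zero_of_lt h]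
      simp
  have hne1 : (((n-1).factorial : ℝ)) ≠ 0 := by positivity
  have hne2 : (((l+m).factorial : ℝ)) ≠ 0 := by positivity
  have hnat' : ((n-l).descFactorial m : ℝ) * n.factorial
      = (n-l).factorial * (n.choose (l+m) * (l+m).factorial) := by exact_mod_cast hnat
  field_simp
  linear_combination (-1:ℝ) * hnat'
end

section
/- For every positive integer n and all integers i, l with 1 ≤ i ≤ n and 1 ≤ l ≤ n, the following identity holds: Σ_{k=0}^{i-1} (-1)^k · C(n, n+l-i+k) · C(n+k-1, k) = δ_{il}, where δ_{il} is the Kronecker delta (equal to 1 if i = l and 0 otherwise). -/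
open Finset

set_option maxRecDepth 4000

lemma coeff_one_sub_pow (n b : ℕ) :
    (PowerSeries.coeff (R := ℤ) b) ((1 - PowerSeries.X) ^ n) = (-1) ^ b * (n.choose b : ℤ) := by
  rw [sub_eq_add_neg, add_comm, add_pow, map_sum]
  have h : ∀ k ∈ range (n+1),
      (PowerSeries.coeff (R := ℤ) b) ((-PowerSeries.X)^k * 1^(n-k) * ((n.choose k : ℕ) : (PowerSeries ℤ)))
        = if k = b then (-1)^b * (n.choose b : ℤ) else 0 := by
    intro k _
    have e : (-PowerSeries.X : (PowerSeries ℤ))^k * 1^(n-k) * ((n.choose k : ℕ) : (PowerSeries ℤ))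
        = PowerSeries.C (R := ℤ) ((-1)^k * (n.choose k : ℤ)) * PowerSeries.X ^ k := by
      rw [map_mul, map_pow, map_neg, map_one,
        show ((n.choose k : ℕ) : (PowerSeries ℤ)) = PowerSeries.C (R := ℤ) (n.choose k : ℤ) from
          (map_natCast (PowerSeries.C (R := ℤ)) _).symm]
      ring
    rw [e, PowerSeries.coeff_C_mul, PowerSeries.coeff_X_pow]
    by_cases hkb : k = b
    · subst hkb; simp
    · simp [hkb, Ne.symm hkb]
  rw [Finset.sum_congr rfl h, Finset.sum_ite_eq']
  by_cases hb : b ∈ range (n+1)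
  · rw [if_pos hb]
  · rw [if_neg hb]
    rw [Finset.mem_range, not_lt] at hb
    rw [Nat.choose_eq_zero_of_lt hb]
    simp

lemma key_identity (n m : ℕ) (hn : 1 ≤ n) :
    ∑ k ∈ Finset.range (m+1),
        (-1 : ℤ) ^ k * (n.choose (m - k) : ℤ) * ((n + k - 1).choose k : ℤ) =
      if m = 0 then 1 else 0 := by
  obtain ⟨d, rfl⟩ : ∃ d, n = d + 1 := ⟨n - 1, (Nat.succ_pred_eq_of_pos hn).symm⟩
  have main := congrArg (PowerSeries.coeff (R := ℤ) m)
    (PowerSeries.mk_add_choose_mul_one_sub_pow_eq_one (S := ℤ) (d := d))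
  rw [PowerSeries.coeff_mul, PowerSeries.coeff_one,
    Finset.Nat.sum_antidiagonal_eq_sum_range_succ_mk] at main
  simp only [PowerSeries.coeff_mk, coeff_one_sub_pow] at main
  -- main : ∑ k in range (m+1), ↑((d+k).choose d) * ((-1)^(m-k) * ↑((d+1).choose (m-k)))
  --        = if m = 0 then 1 else 0
  have key2 : ∑ k ∈ Finset.range (m+1),
      ((d + k).choose d : ℤ) * ((-1)^(m-k) * ((d+1).choose (m-k) : ℤ))
      = (-1 : ℤ)^m * ∑ k ∈ Finset.range (m+1),
        (-1 : ℤ) ^ k * ((d+1).choose (m - k) : ℤ) * ((d + 1 + k - 1).choose k : ℤ) := by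
    rw [Finset.mul_sum]
    refine Finset.sum_congr rfl fun k hk => ?_
    rw [Finset.mem_range, Nat.lt_succ_iff] at hk
    have h1 : d + 1 + k - 1 = d + k := by omega
    have h2 : (d + k).choose d = (d + k).choose k := by
      rw [← Nat.choose_symm (Nat.le_add_left k d)]
      congr 1
      omega
    have hkk : (-1 : ℤ)^k * (-1)^k = 1 := by
      rw [← pow_add]
      exact Even.neg_one_pow ⟨k, rfl⟩
    have h3 : (-1 : ℤ)^(m-k) = (-1)^m * (-1)^k := by
      conv_rhs => rw [show m = m - k + k from by omega]
      rw [pow_add, mul_assoc, hkk, mul_one]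
    rw [h1, h2, h3]
    ring
  rw [key2] at main
  by_cases hm : m = 0
  · subst hm; simpa using main
  · rw [if_neg hm] at main ⊢
    exact mul_left_cancel₀ (a := (-1 : ℤ)^m) (by simp) (by rw [main, mul_zero])

/-- **Lemma 2 of the paper:** for `1 ≤ i ≤ n` and `1 ≤ l ≤ n`,
`∑_{k=0}^{i-1} (-1)^k C(n, n+l-i+k) C(n+k-1, k) = δ_{il}` (Kronecker delta),
as an identity of integers. -/
theorem factorial_hankel_lemma2 (n i l : ℕ)
    (hi : 1 ≤ i) (hin : i ≤ n) (hl : 1 ≤ l) (hln : l ≤ n) :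
    ∑ k ∈ Finset.range i,
        (-1 : ℤ) ^ k * (n.choose (n + l - i + k) : ℤ) * ((n + k - 1).choose k : ℤ) =
      if i = l then 1 else 0 := by
  by_cases hil : i < l
  · rw [if_neg (by omega)]
    refine Finset.sum_eq_zero fun k _ => ?_
    rw [Nat.choose_eq_zero_of_lt (by omega)]
    simp
  · push_neg at hil
    set m := i - l with hm
    have hsub : Finset.range (m + 1) ⊆ Finset.range i := by
      intro x hx
      rw [Finset.mem_range] at *
      omega
    rw [← Finset.sum_subset hsub (fun k _ hk => by
      rw [Finset.mem_range, Nat.lt_succ_iff, not_le] at hk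
      rw [Nat.choose_eq_zero_of_lt (by omega)]
      simp)]
    have heq : ∀ k ∈ Finset.range (m + 1),
        (-1 : ℤ) ^ k * (n.choose (n + l - i + k) : ℤ) * ((n + k - 1).choose k : ℤ)
          = (-1 : ℤ) ^ k * (n.choose (m - k) : ℤ) * ((n + k - 1).choose k : ℤ) := by
      intro k hk
      rw [Finset.mem_range, Nat.lt_succ_iff] at hk
      congr 2
      rw [show n + l - i + k = n - (m - k) from by omega,
        Nat.choose_symm (by omega)]
    rw [Finset.sum_congr rfl heq, key_identity n m (hl.trans hln)]
    congr 1
    simp only [eq_iff_iff]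
    omega
end
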